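/- arXiv:1906.02043 — 4 statements merged into one kernel-verified Lean document; each statement's English description precedes it below -/
import Mathlib

section
/- The set of paths from src explored by the taint-restricted DFS is exactly the set of simple paths from src in G that contain no subpath of three consecutive untainted vertices. -/
/-!
The five properties of the right-hand side are invariants of the generation step, and conversely
they all pass from `v :: p` to `p`, so a path having them is generated by peeling off its head.
-/

/-- `p` contains three consecutive untainted vertices. -/
def threeConsecUntainted {V : Type*} (taint : V → Bool) (p : List V) : Prop :=
  ∃ i, ∀ k < 3, ∃ v, p[i + k]? = some v ∧ taint v = false

/-- TDFS-generable paths from `src`, stored in reverse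
(head of the list = most recently visited vertex, last = `src`). -/
inductive TDFS {V : Type*} (E : V → V → Prop) (taint : V → Bool) (src : V) :
    List V → Prop
  | base : TDFS E taint src [src]
  | step (p : List V) (u v : V) :
      TDFS E taint src p → p.head? = some u → E u v → v ∉ p →
      ¬ threeConsecUntainted taint (v :: p) → TDFS E taint src (v :: p)

section

variable {V : Type*} {E : V → V → Prop} {taint : V → Bool} {src : V} {p : List V}

theorem threeConsecUntainted.cons (v : V) (h : threeConsecUntainted taint p) :
    threeConsecUntainted taint (v :: p) := by
  obtain ⟨i, hi⟩ := h
  refine ⟨i + 1, fun k hk => ?_⟩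
  rw [Nat.add_right_comm, List.getElem?_cons_succ]
  exact hi k hk

theorem not_threeConsecUntainted_of_length_lt_three (h : p.length < 3) :
    ¬ threeConsecUntainted taint p := by
  rintro ⟨i, hi⟩
  obtain ⟨v, hv, -⟩ := hi 2 (by norm_num)
  rw [List.getElem?_eq_none (by omega)] at hv
  cases hv

namespace TDFS

theorem ne_nil (h : TDFS E taint src p) : p ≠ [] := by
  cases h <;> simp

theorem getLast?_eq_some (h : TDFS E taint src p) : p.getLast? = some src := by
  induction h with
  | base => rfl
  | step p u v _ _ _ _ _ ih => rw [List.getLast?_cons, ih]; rfl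

theorem nodup (h : TDFS E taint src p) : p.Nodup := by
  induction h with
  | base => exact List.nodup_singleton src
  | step p u v _ _ _ hv _ ih => exact List.nodup_cons.mpr ⟨hv, ih⟩

theorem isChain (h : TDFS E taint src p) : p.IsChain (fun a b => E b a) := by
  induction h with
  | base => exact List.isChain_singleton src
  | step p u v _ hu hE _ _ ih =>
    refine List.isChain_cons.mpr ⟨fun b hb => ?_, ih⟩
    obtain rfl : u = b := by simpa [hu] using hb
    exact hE

theorem not_threeConsecUntainted (h : TDFS E taint src p) :
    ¬ threeConsecUntainted taint p := by
  cases h with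
  | base => exact not_threeConsecUntainted_of_length_lt_three (by simp)
  | step _ _ _ _ _ _ _ htaint => exact htaint

theorem of_isChain (hne : p ≠ []) (hlast : p.getLast? = some src) (hnd : p.Nodup)
    (hchain : p.IsChain (fun a b => E b a)) (htaint : ¬ threeConsecUntainted taint p) :
    TDFS E taint src p := by
  induction p with
  | nil => exact absurd rfl hne
  | cons v p ih =>
    rcases p with _ | ⟨u, p⟩
    · obtain rfl : v = src := by simpa using hlast
      exact base
    · rw [List.getLast?_cons_cons] at hlast
      obtain ⟨hv, hnd⟩ := List.nodup_cons.mp hnd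
      obtain ⟨hE, hchain⟩ := List.isChain_cons_cons.mp hchain
      have hp : TDFS E taint src (u :: p) :=
        ih (List.cons_ne_nil u p) hlast hnd hchain (mt (threeConsecUntainted.cons v) htaint)
      exact step _ u v hp rfl hE hv htaint

end TDFS

end

/-- The set of paths explored by the taint-restricted DFS from `src` is exactly
the set of simple paths from `src` (here stored in reverse, so `src` is the
last element and consecutive list elements `a :: b :: _` satisfy `E b a`)
containing no three consecutive untainted vertices. -/
theorem stmt2 {V : Type*} (E : V → V → Prop) (taint : V → Bool) (src : V)
    (p : List V) :
    TDFS E taint src p ↔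
      (p ≠ [] ∧ p.getLast? = some src ∧ p.Nodup ∧
        List.Chain' (fun a b => E b a) p ∧
        ¬ threeConsecUntainted taint p) := by
  constructor
  · intro h
    exact ⟨h.ne_nil, h.getLast?_eq_some, h.nodup, h.isChain, h.not_threeConsecUntainted⟩
  · rintro ⟨hne, hlast, hnd, hchain, htaint⟩
    exact TDFS.of_isChain hne hlast hnd hchain htaint
end

section
/- In an acyclic advertisement graph with community semantics, a vertex n forwards community c if and only if there exists a directed path from some vertex m with c ∈ ac(m) to n such that no vertex strictly after m on the path removes c (c ∉ rc) and no vertex on the path after m has c ∈ ac (or equivalently, the last add is not followed by a remove). -/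
/-!
Forwarding propagates along every edge whose target does not remove `c`, so a path that starts
at a vertex adding `c` and meets no removal afterwards forwards `c` all the way. Conversely, by
well-founded induction on `n`: either `n` adds `c` itself (the one-vertex path), or it neither
adds nor removes `c` and forwards it because some predecessor does, whose path is then extended
by `n`.
-/

open List

section Forwarding

variable {V C : Type*} {E : V → V → Prop} {ac rc : V → Set C} {Cf : V → C → Prop} {c : C}

theorem forwards_of_mem_of_isChain
    (hC : ∀ n x, Cf n x ↔ (x ∈ ac n ∨ (x ∉ rc n ∧ ∃ m, E m n ∧ Cf m x)))
    {l : List V} (hl : l.IsChain fun x y => E x y ∧ c ∉ rc y)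
    (hhead : ∀ v ∈ l.head?, c ∈ ac v) : ∀ v ∈ l, Cf v c :=
  hl.induction (Cf · c) l
    (fun x y ⟨hxy, hy⟩ hx => (hC y c).2 (Or.inr ⟨hy, x, hxy, hx⟩))
    (fun hne => (hC _ c).2 (Or.inl (hhead _ (head_mem_head? hne))))

theorem exists_path_of_forwards (hwf : WellFounded E)
    (hC : ∀ n x, Cf n x ↔ (x ∈ ac n ∨ (x ∉ rc n ∧ ∃ m, E m n ∧ Cf m x)))
    (n : V) (hn : Cf n c) :
    ∃ l : List V, l.getLast? = some n ∧ l.IsChain E ∧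
      (∃ v₀, l.head? = some v₀ ∧ c ∈ ac v₀) ∧ ∀ x ∈ l.tail, c ∉ rc x ∧ c ∉ ac x := by
  induction n using hwf.induction with
  | _ n ih =>
  by_cases hac : c ∈ ac n
  · exact ⟨[n], rfl, .singleton n, ⟨n, rfl, hac⟩, by simp⟩
  obtain ⟨hrc, m, hmn, hm⟩ := ((hC n c).1 hn).resolve_left hac
  obtain ⟨l, hlast, hchain, ⟨v₀, hhead, hv₀⟩, htail⟩ := ih m hmn hm
  have hne : l ≠ [] := by rintro rfl; simp at hlast
  refine ⟨l ++ [n], getLast?_concat, ?_, ⟨v₀, ?_, hv₀⟩, ?_⟩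
  · exact hchain.append (.singleton n) (by simp [hlast, hmn])
  · rwa [head?_append_of_ne_nil _ hne]
  · rw [tail_append_of_ne_nil hne]
    simpa [or_imp, forall_and, hrc, hac] using htail

end Forwarding

theorem stmt11_general {V C : Type*} (E : V → V → Prop) (ac rc : V → Set C)
    (hwf : WellFounded E)
    (Cf : V → C → Prop)
    (hC : ∀ n x, Cf n x ↔ (x ∈ ac n ∨ (x ∉ rc n ∧ ∃ m, E m n ∧ Cf m x)))
    (n : V) (c : C) :
    Cf n c ↔
      ∃ l : List V, l.getLast? = some n ∧ List.Chain' E l ∧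
        (∃ v₀, l.head? = some v₀ ∧ c ∈ ac v₀) ∧
        ∀ x ∈ l.tail, c ∉ rc x ∧ c ∉ ac x := by
  refine ⟨exists_path_of_forwards hwf hC n, ?_⟩
  rintro ⟨l, hlast, hchain, ⟨v₀, hhead, hv₀⟩, htail⟩
  have hchain' : l.IsChain fun x y => E x y ∧ c ∉ rc y :=
    IsChain.imp_of_mem_tail_imp (fun _ y _ hy hxy => ⟨hxy, (htail y hy).1⟩) hchain
  exact forwards_of_mem_of_isChain hC hchain' (by simpa [hhead]) n (mem_of_getLast? hlast)

/-- In an acyclic advertisement graph (`E` well-founded) with community semantics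
given by the fixpoint equation `hC`, a vertex `n` forwards community `c` iff there
is a directed path `v₀, v₁, …, vₖ = n` with `c ∈ ac v₀` and no vertex strictly
after `v₀` on the path removes or adds `c` (the case `c ∈ ac n` is the
single-vertex path `[n]`). -/
theorem stmt11 {V C : Type*} (E : V → V → Prop) (ac rc : V → Set C)
    (hdisj : ∀ n, Disjoint (ac n) (rc n))
    (hwf : WellFounded E)
    (Cf : V → C → Prop)
    (hC : ∀ n x, Cf n x ↔ (x ∈ ac n ∨ (x ∉ rc n ∧ ∃ m, E m n ∧ Cf m x)))
    (n : V) (c : C) :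
    Cf n c ↔
      ∃ l : List V, l.getLast? = some n ∧ List.Chain' E l ∧
        (∃ v₀, l.head? = some v₀ ∧ c ∈ ac v₀) ∧
        ∀ x ∈ l.tail, c ∉ rc x ∧ c ∉ ac x :=
  stmt11_general E ac rc hwf Cf hC n c
end

section
/- Any fixed point of the TPVP update (a state where no node would change its rib given its neighbors' ribs) is a stable solution of the corresponding stable paths problem. -/
/-- The candidate paths available to `u` given its neighbors' current ribs:
extensions `u :: q` of a neighbor's rib `q` that are permitted at `u`. -/
def extChoices {V : Type*} (E : V → V → Prop) (permitted : V → Set (List V))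
    (rib : V → Option (List V)) (u : V) : Set (List V) :=
  {p | ∃ v q, E u v ∧ rib v = some q ∧ p = u :: q ∧ p ∈ permitted u}

/-- Stability at `u` (Griffin et al.): `u`'s assigned path is the `pref`-best
among the permitted extensions of its neighbors' assigned paths (the empty path,
modeled as `none`, is chosen iff there is no such extension). -/
def StableAt {V : Type*} (E : V → V → Prop) (permitted : V → Set (List V))
    (pref : V → List V → List V → Prop)
    (rib : V → Option (List V)) (u : V) : Prop :=
  match rib u with
  | none => extChoices E permitted rib u = ∅
  | some p => p ∈ extChoices E permitted rib u ∧
      ∀ q ∈ extChoices E permitted rib u, q ≠ p → pref u p q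

/-- `step` is the TPVP update: each node selects the `pref`-best choice among the
permitted extensions of its neighbors' ribs (or `none` if there is no choice). -/
def IsBestStep {V : Type*} (E : V → V → Prop) (permitted : V → Set (List V))
    (pref : V → List V → List V → Prop)
    (step : (V → Option (List V)) → V → Option (List V)) : Prop :=
  ∀ rib u,
    (step rib u = none ∧ extChoices E permitted rib u = ∅) ∨
    (∃ p, step rib u = some p ∧ p ∈ extChoices E permitted rib u ∧
      ∀ q ∈ extChoices E permitted rib u, q ≠ p → pref u p q)

/-- Any fixed point of the TPVP update (with `rib dst = ε`) is a stable solution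
of the corresponding stable paths problem. -/
theorem stmt15 {V : Type*} (E : V → V → Prop) (dst : V)
    (permitted : V → Set (List V)) (pref : V → List V → List V → Prop)
    (step : (V → Option (List V)) → V → Option (List V))
    (hstep : IsBestStep E permitted pref step)
    (rib : V → Option (List V))
    (hdst : rib dst = some [dst])
    (hfix : ∀ u, u ≠ dst → step rib u = rib u) :
    ∀ u, u ≠ dst → StableAt E permitted pref rib u := by
  intro u hu
  have h := hstep rib u
  have hf := hfix u hu
  unfold StableAt
  rcases h with ⟨h1, h2⟩ | ⟨p, hp, hmem, hbest⟩
  · rw [hf] at h1; rw [h1]; exact h2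
  · rw [hf] at hp; rw [hp]; exact ⟨hmem, hbest⟩
end

section
/- If flow conservation constraints hold (dst emits exactly one unit, src absorbs exactly one unit, and every other node has equal in-flow and out-flow) for a {0,1}-valued assignment A on edges of a finite directed graph, then the support of A contains a directed path from dst to src. -/
/-- In-flow of a `{0,1}` edge assignment `A` at vertex `n`. -/
def inFlow {V : Type*} [Fintype V] (A : V → V → Bool) (n : V) : ℕ :=
  (Finset.univ.filter (fun v => A v n = true)).card

/-- Out-flow of a `{0,1}` edge assignment `A` at vertex `n`. -/
def outFlow {V : Type*} [Fintype V] (A : V → V → Bool) (n : V) : ℕ :=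
  (Finset.univ.filter (fun v => A n v = true)).card

/-- If a `{0,1}` assignment `A` on the edges of a finite directed graph satisfies
unit flow conservation — `dst` emits exactly one unit (and absorbs none), `src`
absorbs exactly one unit (and emits none), and every other vertex has equal
in-flow and out-flow — then the support of `A` contains a directed path from
`dst` to `src`. -/
theorem stmt17 {V : Type*} [Fintype V] [DecidableEq V]
    (E : V → V → Bool) (A : V → V → Bool) (dst src : V)
    (hAE : ∀ a b, A a b = true → E a b = true)
    (hout_dst : outFlow A dst = 1)
    (hin_dst : inFlow A dst = 0)
    (hin_src : inFlow A src = 1)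
    (hout_src : outFlow A src = 0)
    (hcons : ∀ n, n ≠ src → n ≠ dst → inFlow A n = outFlow A n) :
    Relation.ReflTransGen (fun a b => A a b = true) dst src := by
  classical
  by_contra hsrc
  set rel := fun a b => A a b = true with hrel
  set R : Finset V := Finset.univ.filter (fun v => Relation.ReflTransGen rel dst v) with hR
  have hdstR : dst ∈ R := by
    simp only [hR, Finset.mem_filter, Finset.mem_univ, true_and]
    exact Relation.ReflTransGen.refl
  have hsrcR : src ∉ R := by
    simp only [hR, Finset.mem_filter, Finset.mem_univ, true_and]
    exact hsrc
  have hclosed : ∀ a ∈ R, ∀ b, A a b = true → b ∈ R := by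
    intro a ha b hab
    simp only [hR, Finset.mem_filter, Finset.mem_univ, true_and] at ha ⊢
    exact ha.tail hab
  have key1 : ∑ n ∈ R, outFlow A n = (∑ n ∈ R, inFlow A n) + 1 := by
    rw [← Finset.insert_erase hdstR, Finset.sum_insert (Finset.notMem_erase _ _),
        Finset.sum_insert (Finset.notMem_erase _ _), hout_dst, hin_dst]
    have h : ∑ n ∈ R.erase dst, outFlow A n = ∑ n ∈ R.erase dst, inFlow A n := by
      apply Finset.sum_congr rfl
      intro n hn
      have hn' : n ≠ dst := Finset.ne_of_mem_erase hn
      have hn'' : n ≠ src := by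
        intro h; subst h; exact hsrcR (Finset.mem_of_mem_erase hn)
      exact (hcons n hn'' hn').symm
    omega
  have key2 : ∑ n ∈ R, outFlow A n ≤ ∑ n ∈ R, inFlow A n := by
    have h1 : ∑ n ∈ R, outFlow A n
        = ∑ n ∈ R, ∑ v ∈ R, (if A n v = true then 1 else 0) := by
      apply Finset.sum_congr rfl
      intro n hn
      rw [outFlow, ← Finset.card_filter]
      congr 1
      apply Finset.ext
      intro v
      simp only [Finset.mem_filter, Finset.mem_univ, true_and]
      exact ⟨fun hv => ⟨hclosed n hn v hv, hv⟩, fun hv => hv.2⟩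
    rw [h1, Finset.sum_comm]
    apply Finset.sum_le_sum
    intro v _
    calc ∑ n ∈ R, (if A n v = true then 1 else 0)
        ≤ ∑ n ∈ Finset.univ, (if A n v = true then 1 else 0) :=
          Finset.sum_le_sum_of_subset (Finset.subset_univ R)
      _ = inFlow A v := by rw [inFlow, Finset.card_filter]
  omega
end
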